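/- Let T be a finite tree with positive edge weights w and connection latency ρ > 0 under the postal model, where the broadcast time b_time(u, G) of a vertex u in a subtree G is the minimum time for u to originate a message and have it reach all vertices of G, given that a sender takes ρ time units to connect to each successive receiver (the k-th neighbor it contacts receives the message at time k·ρ + w(edge) + (time that neighbor then needs for its own subtree)). If (u,v) is an edge of T and b_time(u, B(u,v)) ≤ b_time(v, B(v,u)), where B(x,y) denotes the component of T − (edge x y) containing x together with x (i.e., T minus the open branch at x containing y), then b_time(u, T) = ρ + w(u,v) + b_time(v, B(v,u)). -/

import Mathlib

/-!
Common definitions for the postal-model broadcasting problem on weighted trees.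
-/

open SimpleGraph

namespace Postal

attribute [local instance] Classical.propDecidable

variable {V : Type*} [Fintype V] [DecidableEq V] (G : SimpleGraph V)

/-- The unique path (as a walk) between two vertices of a tree. -/
noncomputable def tPath (hG : G.IsTree) (u v : V) : G.Walk u v :=
  (hG.existsUnique_path u v).exists.choose

/-- `z` lies in the open branch `O(x,y)`: the component of `T - x` containing `y`. -/
def inO (x y z : V) : Prop := ∃ p : G.Walk y z, x ∉ p.support

/-- The open branch `O(x,y)`. -/
def Obr (x y : V) : Set V := {z | inO G x y z}

/-- The closed branch `B(x,y) = T - O(x,y)` (it contains `x`). -/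
def Bbr (x y : V) : Set V := {z | ¬ inO G x y z}

/-- The parent of `z` with respect to the root `u`: the penultimate vertex on the
unique `u`-to-`z` path. -/
noncomputable def parent (hG : G.IsTree) (u z : V) : V :=
  (tPath G hG u z).getVert ((tPath G hG u z).length - 1)

/-- The receive time of `z` under schedule `σ` when `u` originates the message:
along the unique `u`-to-`z` path, each vertex is contacted in its slot `σ`,
contributing `σ·ρ` connection time plus the edge weight. -/
noncomputable def recvTime (hG : G.IsTree) (w : V → V → ℝ) (ρ : ℝ) (σ : V → ℕ) (u z : V) : ℝ :=
  ((tPath G hG u z).darts.map (fun d => (σ d.toProd.2 : ℝ) * ρ + w d.toProd.1 d.toProd.2)).sum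

/-- A schedule `σ` is valid for source `u` broadcasting over the vertex set `S`:
every non-source vertex gets a slot `≥ 1`, and distinct vertices with the same
parent get distinct slots (a sender contacts its neighbors sequentially). -/
def Valid (hG : G.IsTree) (σ : V → ℕ) (u : V) (S : Set V) : Prop :=
  (∀ z ∈ S, z ≠ u → 1 ≤ σ z) ∧
  (∀ z₁ ∈ S, ∀ z₂ ∈ S, z₁ ≠ u → z₂ ≠ u → z₁ ≠ z₂ →
    parent G hG u z₁ = parent G hG u z₂ → σ z₁ ≠ σ z₂)

/-- The minimum broadcast time for `u` to broadcast a message over the subtree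
induced by `S` under the postal model with latency `ρ`. -/
noncomputable def bTime (hG : G.IsTree) (w : V → V → ℝ) (ρ : ℝ) (u : V) (S : Set V) : ℝ :=
  sInf {m | ∃ σ, Valid G hG σ u S ∧ m = sSup ((recvTime G hG w ρ σ u) '' S)}

/-- Broadcast time over the whole tree. -/
noncomputable def bTimeT (hG : G.IsTree) (w : V → V → ℝ) (ρ : ℝ) (u : V) : ℝ :=
  bTime G hG w ρ u Set.univ

/-- The set of broadcast centers. -/
def BCtr (hG : G.IsTree) (w : V → V → ℝ) (ρ : ℝ) : Set V :=
  {u | ∀ v, bTimeT G hG w ρ u ≤ bTimeT G hG w ρ v}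

/-- A prime broadcast center. -/
def IsPrime (hG : G.IsTree) (w : V → V → ℝ) (ρ : ℝ) (κ : V) : Prop :=
  κ ∈ BCtr G hG w ρ ∧
  ∀ u, G.Adj κ u → bTime G hG w ρ u (Bbr G u κ) ≤ bTime G hG w ρ κ (Bbr G κ u)

/-- Hop distance: number of edges on the unique path. -/
noncomputable def hop (hG : G.IsTree) (x y : V) : ℕ := (tPath G hG x y).length

/-- Total weight of the unique `x`-to-`y` path. -/
noncomputable def pw (hG : G.IsTree) (w : V → V → ℝ) (x y : V) : ℝ :=
  ((tPath G hG x y).darts.map (fun d => w d.toProd.1 d.toProd.2)).sum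

/-- Symmetric weight function. -/
def Wsymm (w : V → V → ℝ) : Prop := ∀ a b, w a b = w b a

/-- Positive weights on edges. -/
def Wpos (w : V → V → ℝ) : Prop := ∀ a b, G.Adj a b → 0 < w a b

/-- A scenario: a symmetric weight assignment within the uncertainty intervals. -/
def Scenario (lo hi : V → V → ℝ) (w : V → V → ℝ) : Prop :=
  (∀ a b, w a b = w b a) ∧ ∀ a b, G.Adj a b → lo a b ≤ w a b ∧ w a b ≤ hi a b

/-- The maximum regret of `x`. -/
noncomputable def maxRegret (hG : G.IsTree) (lo hi : V → V → ℝ) (ρ : ℝ) (x : V) : ℝ :=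
  sSup {r | ∃ w y, Scenario G lo hi w ∧ r = bTimeT G hG w ρ x - bTimeT G hG w ρ y}

/-- `w` is a worst-case scenario of the tree with respect to `x`. -/
def WorstCase (hG : G.IsTree) (lo hi : V → V → ℝ) (ρ : ℝ) (x : V) (w : V → V → ℝ) : Prop :=
  Scenario G lo hi w ∧
  ∃ y, bTimeT G hG w ρ x - bTimeT G hG w ρ y = maxRegret G hG lo hi ρ x

/-- An edge `(a,b)` lies on the unique `x`-to-`y` path. -/
def onPath (hG : G.IsTree) (x y a b : V) : Prop :=
  a ∈ (tPath G hG x y).support ∧ b ∈ (tPath G hG x y).support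

/-- The base scenario `α_{x,y}`: weight `hi` on the `x`-to-`y` path and on edges of
`B(y,x)`, weight `lo` elsewhere. -/
noncomputable def baseScenario (hG : G.IsTree) (lo hi : V → V → ℝ) (x y : V) : V → V → ℝ :=
  fun a b =>
    if onPath G hG x y a b ∨ (a ∈ Bbr G y x ∧ b ∈ Bbr G y x) then hi a b else lo a b

/-- The value `w(y,v) + b_time(v, B(v,y))` of a neighbor `v` of `y`. -/
noncomputable def nval (hG : G.IsTree) (w : V → V → ℝ) (ρ : ℝ) (y v : V) : ℝ :=
  w y v + bTime G hG w ρ v (Bbr G v y)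

/-- Scenario `β^j_{x,y}`: agrees with `α_{x,y}`, except that every edge in
`{(y,u_k)} ∪ E(B(u_k,y))` for `k > j` (with `u` the 1-based sorted enumeration
of the neighbors of `y` in `B(y,x)`) gets weight `lo`. -/
noncomputable def betaScenario (hG : G.IsTree) (lo hi : V → V → ℝ) (x y : V) {h : ℕ}
    (u : Fin h → V) (j : ℕ) : V → V → ℝ :=
  fun a b =>
    if ∃ k : Fin h, j < (k : ℕ) + 1 ∧
        ((a = y ∧ b = u k) ∨ (b = y ∧ a = u k) ∨
          (a ∈ Bbr G (u k) y ∧ b ∈ Bbr G (u k) y)) then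
      lo a b
    else baseScenario G hG lo hi x y a b

/-- Scenario `γ^j_{x,y}`: agrees with `α_{x,y}` on the edges in
`⋃_{1 ≤ k ≤ j} ({(y,u_k)} ∪ E(B(u_k,y)))` and with the scenario `s` elsewhere. -/
noncomputable def gammaScenario (hG : G.IsTree) (lo hi : V → V → ℝ) (s : V → V → ℝ)
    (x y : V) {h : ℕ} (u : Fin h → V) (j : ℕ) : V → V → ℝ :=
  fun a b =>
    if ∃ k : Fin h, (k : ℕ) + 1 ≤ j ∧
        ((a = y ∧ b = u k) ∨ (b = y ∧ a = u k) ∨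
          (a ∈ Bbr G (u k) y ∧ b ∈ Bbr G (u k) y)) then
      baseScenario G hG lo hi x y a b
    else s a b

/-- The set of neighbors of `y` inside the branch `B(y,x)`. -/
def nbrIn (x y : V) : Set V := {v | G.Adj y v ∧ v ∈ Bbr G y x}

end Postal

/-!
Any schedule from `u` informs `v` in some slot `k ≥ 1`, and every vertex of `B(v,u)` is reached
through `v`, so it is informed no earlier than `kρ + w(u,v)` plus its time under the induced
schedule from `v` on `B(v,u)`; this gives `≥`. Conversely, let `u` call `v` first and then run a
near-optimal schedule for `B(u,v)` one slot late, while `v` runs a near-optimal schedule for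
`B(v,u)`. Vertices of `B(v,u)` are then informed by about `ρ + w(u,v) + b_time(v, B(v,u))`, and
those of `B(u,v)` by about `ρ + b_time(u, B(u,v))`, which the hypothesis and `w(u,v) > 0` bound
by the same quantity.
-/

namespace Postal

noncomputable def makespan {V : Type*} (G : SimpleGraph V) (hG : G.IsTree) (w : V → V → ℝ)
    (ρ : ℝ) (σ : V → ℕ) (u : V) (S : Set V) : ℝ :=
  sSup (recvTime G hG w ρ σ u '' S)

open Classical in
/-- `u` calls `v` first and then follows `σ₁` one slot later, while `v` follows `σ₂` on its
side of the edge. -/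
noncomputable def glueSchedule {V : Type*} (G : SimpleGraph V) (hG : G.IsTree) (u v : V)
    (σ₁ σ₂ : V → ℕ) : V → ℕ :=
  fun z => if z ∈ Bbr G v u then (if z = v then 1 else σ₂ z)
    else σ₁ z + if parent G hG u z = u then 1 else 0

variable {V : Type*} {G : SimpleGraph V} {w : V → V → ℝ} {ρ : ℝ}
  {σ σ' σ₁ σ₂ : V → ℕ} {a b c u v x z : V} {S : Set V}

section Branches

lemma tPath_isPath (hG : G.IsTree) (u v : V) : (tPath G hG u v).IsPath :=
  (hG.existsUnique_path u v).exists.choose_spec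

lemma tPath_eq_of_isPath (hG : G.IsTree) {p : G.Walk u v} (hp : p.IsPath) :
    tPath G hG u v = p :=
  (hG.existsUnique_path u v).unique (tPath_isPath hG u v) hp

lemma inO_iff (hG : G.IsTree) : inO G x a z ↔ x ∉ (tPath G hG a z).support := by
  classical
  refine ⟨fun ⟨p, hp⟩ hx => hp ?_, fun h => ⟨_, h⟩⟩
  rw [tPath_eq_of_isPath hG p.toPath.2] at hx
  exact p.support_toPath_subset_support hx

lemma inO_of_mem_Bbr (hG : G.IsTree) (hab : a ≠ b) (hz : z ∈ Bbr G a b) : inO G b a z := by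
  classical
  have ha : a ∈ (tPath G hG b z).support := by
    by_contra h
    exact hz ((inO_iff hG).2 h)
  refine ⟨(tPath G hG b z).dropUntil a ha, fun hb => ?_⟩
  have hnd := (tPath_isPath hG b z).support_nodup
  rw [← (tPath G hG b z).take_spec ha, Walk.support_append, List.nodup_append] at hnd
  rw [← Walk.cons_tail_support, List.mem_cons] at hb
  exact hb.elim (fun h => hab h.symm) fun hb => hnd.2.2 _ (Walk.start_mem_support _) _ hb rfl

lemma mem_Bbr_of_inO (hG : G.IsTree) (hab : G.Adj a b) (hz : inO G a b z) : z ∈ Bbr G b a := by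
  intro h
  rw [inO_iff hG] at hz h
  have hp : (Walk.cons hab (tPath G hG b z)).IsPath :=
    (Walk.cons_isPath_iff _ _).2 ⟨tPath_isPath hG b z, hz⟩
  apply h
  rw [tPath_eq_of_isPath hG hp, Walk.support_cons]
  exact List.mem_cons_of_mem _ (Walk.start_mem_support _)

lemma mem_Bbr_iff_notMem_Bbr (hG : G.IsTree) (huv : G.Adj u v) :
    z ∈ Bbr G u v ↔ z ∉ Bbr G v u :=
  ⟨fun h hc => hc (inO_of_mem_Bbr hG huv.ne h),
    fun h => mem_Bbr_of_inO hG huv.symm (not_not.1 h)⟩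

lemma self_mem_Bbr (a b : V) : a ∈ Bbr G a b :=
  fun ⟨p, hp⟩ => hp p.end_mem_support

lemma notMem_Bbr (hvu : v ≠ u) : u ∉ Bbr G v u :=
  fun h => h ⟨Walk.nil, by simpa using hvu⟩

lemma tPath_eq_cons (hG : G.IsTree) (huv : G.Adj u v) (hz : z ∈ Bbr G v u) :
    tPath G hG u z = Walk.cons huv (tPath G hG v z) :=
  tPath_eq_of_isPath hG ((Walk.cons_isPath_iff _ _).2
    ⟨tPath_isPath hG v z, (inO_iff hG).1 (inO_of_mem_Bbr hG huv.ne' hz)⟩)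

lemma support_tPath_subset_Bbr (hG : G.IsTree) (huv : G.Adj u v) (hz : z ∈ Bbr G v u) :
    ∀ x ∈ (tPath G hG v z).support, x ∈ Bbr G v u := by
  classical
  intro x hx hxu
  have hu : u ∉ (tPath G hG v z).support := (inO_iff hG).1 (inO_of_mem_Bbr hG huv.ne' hz)
  exact mem_Bbr_of_inO hG huv.symm hxu
    ⟨(tPath G hG v z).takeUntil x hx,
      fun h => hu (Walk.support_takeUntil_subset_support _ hx h)⟩

lemma exists_adj_mem_Bbr (hG : G.IsTree) (hzu : z ≠ u) :
    ∃ c, G.Adj u c ∧ z ∈ Bbr G c u := by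
  obtain ⟨c, huc, p, hp⟩ := Walk.exists_eq_cons_of_ne hzu.symm (tPath G hG u z)
  have hpath := tPath_isPath hG u z
  rw [hp, Walk.cons_isPath_iff] at hpath
  exact ⟨c, huc, mem_Bbr_of_inO hG huc ⟨p, hpath.2⟩⟩

/-- For `c` adjacent to `u`, `B(c,u)` is the open branch `O(u,c)`, which misses `O(u,v)`. -/
lemma Bbr_subset_Bbr (hG : G.IsTree) (huc : G.Adj u c) (huv : G.Adj u v) (hcv : c ≠ v) :
    Bbr G c u ⊆ Bbr G u v := by
  intro x hx
  by_contra hxv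
  have hx' := (not_iff_not.2 (mem_Bbr_iff_notMem_Bbr hG huv)).1 hxv
  have h := congrArg Walk.snd
    ((tPath_eq_cons hG huc hx).symm.trans (tPath_eq_cons hG huv (not_not.1 hx')))
  simp only [Walk.snd_cons] at h
  exact hcv h

end Branches

section Parents

lemma parent_mem_support (hG : G.IsTree) (u z : V) :
    parent G hG u z ∈ (tPath G hG u z).support :=
  Walk.mem_support_iff_exists_getVert.2 ⟨_, rfl, Nat.sub_le _ _⟩

lemma parent_of_adj (hG : G.IsTree) (huv : G.Adj u v) : parent G hG u v = u := by
  have hp : (Walk.cons huv Walk.nil).IsPath := by simp [Walk.cons_isPath_iff, huv.ne]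
  simp [parent, tPath_eq_of_isPath hG hp]

lemma parent_eq_of_mem_Bbr (hG : G.IsTree) (huv : G.Adj u v) (hz : z ∈ Bbr G v u)
    (hzv : z ≠ v) : parent G hG u z = parent G hG v z := by
  unfold parent
  rw [tPath_eq_cons hG huv hz]
  obtain ⟨m, hm⟩ := Nat.exists_eq_succ_of_ne_zero fun h =>
    hzv (Walk.eq_of_length_eq_zero h).symm
  rw [Walk.length_cons, hm]
  simp [Walk.getVert_cons_succ]

lemma parent_mem_Bbr_iff (hG : G.IsTree) (huv : G.Adj u v) :
    parent G hG u z ∈ Bbr G v u ↔ z ∈ Bbr G v u ∧ z ≠ v := by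
  constructor
  · intro h
    by_cases hz : z ∈ Bbr G v u
    · refine ⟨hz, fun hzv => ?_⟩
      rw [hzv, parent_of_adj hG huv] at h
      exact notMem_Bbr huv.ne' h
    · have hz' := (mem_Bbr_iff_notMem_Bbr hG huv).2 hz
      exact absurd h ((mem_Bbr_iff_notMem_Bbr hG huv).1
        (support_tPath_subset_Bbr hG huv.symm hz' _ (parent_mem_support hG u z)))
  · rintro ⟨hz, hzv⟩
    rw [parent_eq_of_mem_Bbr hG huv hz hzv]
    exact support_tPath_subset_Bbr hG huv hz _ (parent_mem_support hG v z)

end Parents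

section ReceiveTimes

lemma recvTime_self (hG : G.IsTree) : recvTime G hG w ρ σ u u = 0 := by
  simp [recvTime, tPath_eq_of_isPath hG (Walk.IsPath.nil (u := u))]

lemma recvTime_of_mem_Bbr (hG : G.IsTree) (huv : G.Adj u v) (hz : z ∈ Bbr G v u) :
    recvTime G hG w ρ σ u z = σ v * ρ + w u v + recvTime G hG w ρ σ v z := by
  simp [recvTime, tPath_eq_cons hG huv hz, Walk.darts_cons]

lemma recvTime_congr (hG : G.IsTree) (huv : G.Adj u v) (hz : z ∈ Bbr G v u)
    (h : ∀ x ∈ Bbr G v u, x ≠ v → σ x = σ' x) :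
    recvTime G hG w ρ σ v z = recvTime G hG w ρ σ' v z := by
  unfold recvTime
  congr 1
  refine List.map_congr_left fun d hd => ?_
  have hmem : d.toProd.2 ∈ (tPath G hG v z).support.tail := by
    rw [← Walk.map_snd_darts]
    exact List.mem_map_of_mem hd
  have hnd := (tPath_isPath hG v z).support_nodup
  rw [← Walk.cons_tail_support, List.nodup_cons] at hnd
  rw [h _ (support_tPath_subset_Bbr hG huv hz _ (List.mem_of_mem_tail hmem))
    fun hv => hnd.1 (hv ▸ hmem)]

end ReceiveTimes

section Schedules

lemma Valid.restrict_Bbr (hG : G.IsTree) (huv : G.Adj u v) (hσ : Valid G hG σ u Set.univ) :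
    Valid G hG σ v (Bbr G v u) := by
  have hu : ∀ {z}, z ∈ Bbr G v u → z ≠ u := fun hz h => notMem_Bbr huv.ne' (h ▸ hz)
  refine ⟨fun z hz _ => hσ.1 z trivial (hu hz), fun z₁ h₁ z₂ h₂ h₁v h₂v hne hpar => ?_⟩
  refine hσ.2 z₁ trivial z₂ trivial (hu h₁) (hu h₂) hne ?_
  rwa [parent_eq_of_mem_Bbr hG huv h₁ h₁v, parent_eq_of_mem_Bbr hG huv h₂ h₂v]

lemma exists_valid [Finite V] (hG : G.IsTree) (u : V) (S : Set V) :
    ∃ σ, Valid G hG σ u S := by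
  obtain ⟨n, ⟨e⟩⟩ := Finite.exists_equiv_fin V
  refine ⟨fun z => e z + 1, fun _ _ _ => Nat.le_add_left 1 _,
    fun z₁ _ z₂ _ _ _ hne _ h => hne (e.injective (Fin.ext ?_))⟩
  simpa using h

lemma recvTime_le_makespan [Finite V] (hG : G.IsTree) (hz : z ∈ S) :
    recvTime G hG w ρ σ u z ≤ makespan G hG w ρ σ u S :=
  le_csSup (S.toFinite.image _).bddAbove ⟨z, hz, rfl⟩

lemma makespan_le (hG : G.IsTree) {r : ℝ} (hS : S.Nonempty)
    (h : ∀ z ∈ S, recvTime G hG w ρ σ u z ≤ r) :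
    makespan G hG w ρ σ u S ≤ r :=
  csSup_le (hS.image _) (by rintro _ ⟨z, hz, rfl⟩; exact h z hz)

lemma exists_recvTime_eq_makespan [Finite V] (hG : G.IsTree) (hS : S.Nonempty) :
    ∃ z ∈ S, recvTime G hG w ρ σ u z = makespan G hG w ρ σ u S :=
  (hS.image _).csSup_mem (S.toFinite.image _)

lemma bTime_le_makespan [Finite V] (hG : G.IsTree) (hσ : Valid G hG σ u S) (hu : u ∈ S) :
    bTime G hG w ρ u S ≤ makespan G hG w ρ σ u S := by
  refine csInf_le ⟨0, ?_⟩ ⟨σ, hσ, rfl⟩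
  rintro _ ⟨σ', -, rfl⟩
  exact (recvTime_self hG).symm.le.trans (recvTime_le_makespan hG hu)

lemma le_bTime [Finite V] (hG : G.IsTree) {r : ℝ}
    (h : ∀ σ, Valid G hG σ u S → r ≤ makespan G hG w ρ σ u S) :
    r ≤ bTime G hG w ρ u S := by
  obtain ⟨σ, hσ⟩ := exists_valid hG u S
  exact le_csInf ⟨_, σ, hσ, rfl⟩ (by rintro _ ⟨σ', hσ', rfl⟩; exact h σ' hσ')

lemma exists_makespan_lt_bTime_add [Finite V] (hG : G.IsTree) (w : V → V → ℝ) (ρ : ℝ) (u : V)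
    (S : Set V) {ε : ℝ} (hε : 0 < ε) :
    ∃ σ, Valid G hG σ u S ∧ makespan G hG w ρ σ u S < bTime G hG w ρ u S + ε := by
  obtain ⟨σ, hσ⟩ := exists_valid hG u S
  obtain ⟨_, ⟨σ', hσ', rfl⟩, hlt⟩ := Real.lt_sInf_add_pos
    (s := {m | ∃ σ, Valid G hG σ u S ∧ m = makespan G hG w ρ σ u S}) ⟨_, σ, hσ, rfl⟩ hε
  exact ⟨σ', hσ', hlt⟩

end Schedules

section Glue

open Classical

lemma glueSchedule_right (hG : G.IsTree) : glueSchedule G hG u v σ₁ σ₂ v = 1 := by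
  simp [glueSchedule, self_mem_Bbr]

lemma glueSchedule_of_mem (hG : G.IsTree) (hz : z ∈ Bbr G v u) (hzv : z ≠ v) :
    glueSchedule G hG u v σ₁ σ₂ z = σ₂ z := by
  simp [glueSchedule, hz, hzv]

lemma glueSchedule_of_notMem (hG : G.IsTree) (hz : z ∉ Bbr G v u) :
    glueSchedule G hG u v σ₁ σ₂ z = σ₁ z + if parent G hG u z = u then 1 else 0 := by
  simp [glueSchedule, hz]

lemma valid_glueSchedule (hG : G.IsTree) (huv : G.Adj u v) (h₁ : Valid G hG σ₁ u (Bbr G u v))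
    (h₂ : Valid G hG σ₂ v (Bbr G v u)) :
    Valid G hG (glueSchedule G hG u v σ₁ σ₂) u Set.univ := by
  have near : ∀ {z}, z ∉ Bbr G v u → z ∈ Bbr G u v := (mem_Bbr_iff_notMem_Bbr hG huv).2
  refine ⟨fun z _ hzu => ?_, fun z₁ _ z₂ _ h₁u h₂u hne hpar => ?_⟩
  · by_cases hz : z ∈ Bbr G v u
    · by_cases hzv : z = v
      · rw [hzv, glueSchedule_right]
      · rw [glueSchedule_of_mem hG hz hzv]
        exact h₂.1 z hz hzv
    · rw [glueSchedule_of_notMem hG hz]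
      exact (h₁.1 z (near hz) hzu).trans (Nat.le_add_right _ _)
  by_cases hp : parent G hG u z₁ ∈ Bbr G v u
  · obtain ⟨hz₁, hz₁v⟩ := (parent_mem_Bbr_iff hG huv).1 hp
    obtain ⟨hz₂, hz₂v⟩ := (parent_mem_Bbr_iff hG huv).1 (hpar ▸ hp)
    rw [glueSchedule_of_mem hG hz₁ hz₁v, glueSchedule_of_mem hG hz₂ hz₂v]
    refine h₂.2 z₁ hz₁ z₂ hz₂ hz₁v hz₂v hne ?_
    rwa [← parent_eq_of_mem_Bbr hG huv hz₁ hz₁v, ← parent_eq_of_mem_Bbr hG huv hz₂ hz₂v]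
  -- Otherwise each vertex is `v` or lies on `u`'s side, where `v` competes with `u`'s children.
  have side : ∀ z, parent G hG u z ∉ Bbr G v u → z = v ∨ z ∉ Bbr G v u := fun z h => by
    rw [parent_mem_Bbr_iff hG huv] at h
    tauto
  have ne_right : ∀ z, z ∉ Bbr G v u → z ≠ u → parent G hG u z = u →
      glueSchedule G hG u v σ₁ σ₂ z ≠ glueSchedule G hG u v σ₁ σ₂ v := by
    intro z hz hzu hpz
    rw [glueSchedule_of_notMem hG hz, glueSchedule_right, if_pos hpz]
    have := h₁.1 z (near hz) hzu
    omega
  rcases side z₁ hp, side z₂ (hpar ▸ hp) with ⟨e₁ | hz₁, e₂ | hz₂⟩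
  · exact absurd (e₁.trans e₂.symm) hne
  · rw [e₁, parent_of_adj hG huv] at hpar
    rw [e₁]
    exact (ne_right z₂ hz₂ h₂u hpar.symm).symm
  · rw [e₂, parent_of_adj hG huv] at hpar
    rw [e₂]
    exact ne_right z₁ hz₁ h₁u hpar
  · rw [glueSchedule_of_notMem hG hz₁, glueSchedule_of_notMem hG hz₂, hpar]
    have := h₁.2 z₁ (near hz₁) z₂ (near hz₂) h₁u h₂u hne hpar
    omega

lemma recvTime_glueSchedule_of_mem (hG : G.IsTree) (huv : G.Adj u v) (hz : z ∈ Bbr G v u) :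
    recvTime G hG w ρ (glueSchedule G hG u v σ₁ σ₂) u z =
      ρ + w u v + recvTime G hG w ρ σ₂ v z := by
  rw [recvTime_of_mem_Bbr hG huv hz, glueSchedule_right,
    recvTime_congr hG huv hz fun x hx hxv => glueSchedule_of_mem hG hx hxv]
  push_cast
  ring

lemma recvTime_glueSchedule_le (hG : G.IsTree) (hρ : 0 ≤ ρ) (huv : G.Adj u v)
    (hz : z ∈ Bbr G u v) :
    recvTime G hG w ρ (glueSchedule G hG u v σ₁ σ₂) u z ≤ recvTime G hG w ρ σ₁ u z + ρ := by
  by_cases hzu : z = u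
  · rw [hzu, recvTime_self, recvTime_self]
    linarith
  obtain ⟨c, huc, hzc⟩ := exists_adj_mem_Bbr hG hzu
  have hcv : c ≠ v := fun hcv => (mem_Bbr_iff_notMem_Bbr hG huv).1 hz (hcv ▸ hzc)
  have hfar : ∀ x ∈ Bbr G c u, x ∉ Bbr G v u := fun x hx =>
    (mem_Bbr_iff_notMem_Bbr hG huv).1 (Bbr_subset_Bbr hG huc huv hcv hx)
  have hc : glueSchedule G hG u v σ₁ σ₂ c = σ₁ c + 1 := by
    rw [glueSchedule_of_notMem hG (hfar c (self_mem_Bbr c u)), if_pos (parent_of_adj hG huc)]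
  have hrest : ∀ x ∈ Bbr G c u, x ≠ c → glueSchedule G hG u v σ₁ σ₂ x = σ₁ x := by
    intro x hx hxc
    have hpx : parent G hG u x ≠ u := fun h =>
      notMem_Bbr huc.ne' (h ▸ (parent_mem_Bbr_iff hG huc).2 ⟨hx, hxc⟩)
    rw [glueSchedule_of_notMem hG (hfar x hx), if_neg hpx, add_zero]
  rw [recvTime_of_mem_Bbr hG huc hzc, recvTime_of_mem_Bbr hG huc hzc, hc,
    recvTime_congr hG huc hzc hrest]
  push_cast
  linarith

lemma bTimeT_le_max [Finite V] (hG : G.IsTree) (hρ : 0 ≤ ρ) (huv : G.Adj u v)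
    (h₁ : Valid G hG σ₁ u (Bbr G u v)) (h₂ : Valid G hG σ₂ v (Bbr G v u)) :
    bTimeT G hG w ρ u ≤ max (makespan G hG w ρ σ₁ u (Bbr G u v) + ρ)
      (ρ + w u v + makespan G hG w ρ σ₂ v (Bbr G v u)) := by
  refine (bTime_le_makespan hG (valid_glueSchedule hG huv h₁ h₂) trivial).trans
    (makespan_le hG ⟨u, trivial⟩ fun z _ => ?_)
  by_cases hz : z ∈ Bbr G v u
  · rw [recvTime_glueSchedule_of_mem hG huv hz]
    exact le_max_of_le_right (by gcongr; exact recvTime_le_makespan hG hz)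
  · have hz' := (mem_Bbr_iff_notMem_Bbr hG huv).2 hz
    exact le_max_of_le_left ((recvTime_glueSchedule_le hG hρ huv hz').trans
      (by gcongr; exact recvTime_le_makespan hG hz'))

end Glue

lemma add_bTime_le_bTimeT [Finite V] (hG : G.IsTree) (hρ : 0 ≤ ρ) (huv : G.Adj u v) :
    ρ + w u v + bTime G hG w ρ v (Bbr G v u) ≤ bTimeT G hG w ρ u := by
  refine le_bTime hG fun σ hσ => ?_
  obtain ⟨z, hz, hzmax⟩ :=
    exists_recvTime_eq_makespan hG (w := w) (ρ := ρ) (σ := σ) ⟨v, self_mem_Bbr v u⟩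
  have hσv : (1 : ℝ) ≤ σ v := by exact_mod_cast hσ.1 v trivial huv.ne'
  calc ρ + w u v + bTime G hG w ρ v (Bbr G v u)
      ≤ σ v * ρ + w u v + recvTime G hG w ρ σ v z := by
        rw [hzmax]
        gcongr
        · exact le_mul_of_one_le_left hρ hσv
        · exact bTime_le_makespan hG (hσ.restrict_Bbr hG huv) (self_mem_Bbr v u)
    _ = recvTime G hG w ρ σ u z := (recvTime_of_mem_Bbr hG huv hz).symm
    _ ≤ makespan G hG w ρ σ u Set.univ := recvTime_le_makespan hG trivial

theorem stmt0_general {V : Type*} [Fintype V] (G : SimpleGraph V) (hG : G.IsTree)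
    (w : V → V → ℝ) (hpos : Wpos G w) (ρ : ℝ) (hρ : 0 < ρ)
    (u v : V) (huv : G.Adj u v)
    (hle : bTime G hG w ρ u (Bbr G u v) ≤ bTime G hG w ρ v (Bbr G v u)) :
    bTimeT G hG w ρ u = ρ + w u v + bTime G hG w ρ v (Bbr G v u) := by
  refine le_antisymm (le_of_forall_pos_le_add fun ε hε => ?_)
    (add_bTime_le_bTimeT hG hρ.le huv)
  obtain ⟨σ₁, h₁, hσ₁⟩ := exists_makespan_lt_bTime_add hG w ρ u (Bbr G u v) hε
  obtain ⟨σ₂, h₂, hσ₂⟩ := exists_makespan_lt_bTime_add hG w ρ v (Bbr G v u) hε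
  have hw := hpos u v huv
  exact (bTimeT_le_max hG hρ.le huv h₁ h₂).trans (max_le (by linarith) (by linarith))

/-- If `(u,v)` is an edge of `T` and
`b_time(u, B(u,v)) ≤ b_time(v, B(v,u))`, then
`b_time(u, T) = ρ + w(u,v) + b_time(v, B(v,u))`. -/
theorem stmt0 {V : Type*} [Fintype V] [DecidableEq V] (G : SimpleGraph V) (hG : G.IsTree)
    (w : V → V → ℝ) (hsym : Wsymm w) (hpos : Wpos G w) (ρ : ℝ) (hρ : 0 < ρ)
    (u v : V) (huv : G.Adj u v)
    (hle : bTime G hG w ρ u (Bbr G u v) ≤ bTime G hG w ρ v (Bbr G v u)) :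
    bTimeT G hG w ρ u = ρ + w u v + bTime G hG w ρ v (Bbr G v u) :=
  stmt0_general G hG w hpos ρ hρ u v huv hle

end Postal
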